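/- If 0 ≤ a₁ ≤ ⋯ ≤ a_n with a_{n-1} = a_n − 1, then [a_n]_q!/∏_{i=1}^{n-1}[a_i+1]_q = [a_{n-1}]_q!/∏_{i=1}^{n-2}[a_i+1]_q; moreover if {a₁,…,a_{n-1}} is realizable as D(T') for some rooted tree T', then {a₁,…,a_n} is realizable as D(T) for the tree T obtained from T' by stabilization (adding a new root below the old root). -/

import Mathlib

/-!
The identity is `[a + 1]_q! = [a]_q! · [a + 1]_q` with `a = a_{n-1}`, the new factor cancelling
against the last factor of the denominator. For the tree statement, the root of a tree has the
largest descendant count, so a tree `T'` with `D(T') = {a₁,…,a_{n-1}}` has `a_{n-1}` edges; the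
new root of the stabilization then has `a_{n-1} + 1 = a_n` descendants.
-/

open Finset

/-- The q-number `[n]_q = 1 + q + ⋯ + q^{n-1}` as a rational function over ℚ. -/
noncomputable def qnum (n : ℕ) : RatFunc ℚ := ∑ i ∈ Finset.range n, RatFunc.X ^ i

/-- The q-factorial `[n]_q! = ∏_{i=1}^n [i]_q`. -/
noncomputable def qfact (n : ℕ) : RatFunc ℚ := ∏ i ∈ Finset.range n, qnum (i + 1)

/-- The q-binomial coefficient `[m+n]_q! / ([m]_q! [n]_q!)`. -/
noncomputable def qbinom (m n : ℕ) : RatFunc ℚ := qfact (m + n) / (qfact m * qfact n)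

/-- The q-multinomial coefficient of a list of nonnegative integers. -/
noncomputable def qmultinomial (l : List ℕ) : RatFunc ℚ :=
  qfact l.sum / (l.map qfact).prod

/-- Plane rooted trees: a root together with an ordered list of subtrees. -/
inductive PTree where
  | node : List PTree → PTree

namespace PTree

/-- Number of edges of a rooted tree. -/
def edges : PTree → ℕ
  | node ts => (ts.attach.map fun t => edges t.1 + 1).sum
decreasing_by simp only [PTree.node.sizeOf_spec, Nat.add_comm 1]; exact Nat.lt_succ_of_lt (List.sizeOf_lt_of_mem t.2)

/-- Multiset of descendant counts `d(v)` over the non-root vertices of `T`. -/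
def ND : PTree → Multiset ℕ
  | node ts => (ts.attach.map fun t => edges t.1 ::ₘ ND t.1).sum
decreasing_by simp only [PTree.node.sizeOf_spec, Nat.add_comm 1]; exact Nat.lt_succ_of_lt (List.sizeOf_lt_of_mem t.2)

/-- Multiset `D(T) = {d(v) : v ∈ V(T)}` of descendant counts over all vertices. -/
def D (t : PTree) : Multiset ℕ := edges t ::ₘ ND t

/-- The plucking polynomial `Q(T) = [d(r)]_q! / ∏_{v ≠ r} [d(v)+1]_q`. -/
noncomputable def Q (t : PTree) : RatFunc ℚ :=
  qfact (edges t) / ((ND t).map fun x => qnum (x + 1)).prod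

end PTree

lemma qnum_succ_ne_zero (m : ℕ) : qnum (m + 1) ≠ 0 := by
  have hpoly : qnum (m + 1) =
      algebraMap (Polynomial ℚ) (RatFunc ℚ) (∑ i ∈ range (m + 1), Polynomial.X ^ i) := by
    simp [qnum, map_sum, RatFunc.algebraMap_X]
  rw [hpoly]
  refine RatFunc.algebraMap_ne_zero fun hzero => ?_
  have hcoeff := congrArg (Polynomial.coeff · 0) hzero
  simp [Polynomial.coeff_X_pow] at hcoeff

lemma qfact_succ (m : ℕ) : qfact (m + 1) = qfact m * qnum (m + 1) :=
  prod_range_succ _ _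

lemma qfact_succ_div_prod_range_succ (f : ℕ → ℕ) (k : ℕ) :
    qfact (f k + 1) / ∏ i ∈ range (k + 1), qnum (f i + 1) =
      qfact (f k) / ∏ i ∈ range k, qnum (f i + 1) := by
  rw [qfact_succ, prod_range_succ]
  exact mul_div_mul_right _ _ (qnum_succ_ne_zero _)

namespace PTree

theorem le_edges_of_mem_ND : ∀ (t : PTree), ∀ x ∈ t.ND, x ≤ t.edges
  | node ts => by
    intro x hx
    rw [ND, ← Multiset.sum_coe, ← Multiset.map_coe] at hx
    obtain ⟨_, hchild, hxs⟩ := Multiset.mem_join.mp hx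
    obtain ⟨s, hs, rfl⟩ := Multiset.mem_map.mp hchild
    have hs_le : edges s.1 + 1 ≤ edges (node ts) := by
      rw [edges, ← Multiset.sum_coe, ← Multiset.map_coe]
      exact Multiset.le_sum_of_mem
        (Multiset.mem_map_of_mem (fun t : {t // t ∈ ts} => edges t.1 + 1) hs)
    rcases Multiset.mem_cons.mp hxs with rfl | hxs
    · omega
    · have := le_edges_of_mem_ND s.1 x hxs
      omega
decreasing_by
  simp only [PTree.node.sizeOf_spec, Nat.add_comm 1]
  exact Nat.lt_succ_of_lt (List.sizeOf_lt_of_mem s.2)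

theorem le_edges_of_mem_D {t : PTree} {x : ℕ} (hx : x ∈ t.D) : x ≤ t.edges := by
  rcases Multiset.mem_cons.mp hx with rfl | hx
  · exact le_rfl
  · exact le_edges_of_mem_ND t x hx

theorem edges_mem_D (t : PTree) : t.edges ∈ t.D :=
  Multiset.mem_cons_self _ _

theorem D_node_singleton (t : PTree) : D (node [t]) = (edges t + 1) ::ₘ D t := by
  simp [D, edges, ND, List.attach]

theorem edges_eq_of_D_eq_map_range {t : PTree} {a : ℕ → ℕ} {m : ℕ}
    (hmax : ∀ i ≤ m, a i ≤ a m) (hD : t.D = (Multiset.range (m + 1)).map a) :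
    t.edges = a m := by
  have hle : t.edges ≤ a m := by
    obtain ⟨i, hi, hia⟩ := Multiset.mem_map.mp (hD ▸ edges_mem_D t)
    exact hia ▸ hmax i (Nat.lt_succ_iff.mp (Multiset.mem_range.mp hi))
  have hge : a m ≤ t.edges :=
    le_edges_of_mem_D (hD ▸ Multiset.mem_map_of_mem a (Multiset.mem_range.mpr m.lt_succ_self))
  omega

end PTree

open PTree in
theorem stabilization_realizes_general (n : ℕ) (a : ℕ → ℕ)
    (hmono : ∀ i j, i ≤ j → j < n → a i ≤ a j) (h : a (n - 2) + 1 = a (n - 1)) :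
    (qfact (a (n - 1)) / ∏ i ∈ Finset.range (n - 1), qnum (a i + 1) =
      qfact (a (n - 2)) / ∏ i ∈ Finset.range (n - 2), qnum (a i + 1)) ∧
    (∀ t' : PTree, D t' = (Multiset.range (n - 1)).map a →
      D (node [t']) = (Multiset.range n).map a) := by
  -- for `n < 2`, `h` reads `a 0 + 1 = a 0`
  obtain ⟨m, rfl⟩ : ∃ m, n = m + 2 := ⟨n - 2, by rcases n with _ | _ | n <;> simp_all⟩
  simp only [show m + 2 - 1 = m + 1 from rfl, show m + 2 - 2 = m from rfl] at h ⊢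
  refine ⟨h ▸ qfact_succ_div_prod_range_succ a m, fun t' ht' => ?_⟩
  have hedges : edges t' = a m :=
    edges_eq_of_D_eq_map_range (fun i hi => hmono i m hi (by omega)) ht'
  rw [D_node_singleton, hedges, ht', h, Multiset.range_succ (m + 1), Multiset.map_cons]

open PTree in
/-- If `a_{n-1} = a_n − 1` (0-indexed: `a (n-2) + 1 = a (n-1)`), then
`[a_n]_q!/∏_{i=1}^{n-1}[a_i+1]_q = [a_{n-1}]_q!/∏_{i=1}^{n-2}[a_i+1]_q`; moreover, if `T'`
realizes `{a₁,…,a_{n-1}}` then the stabilization of `T'` (a new root attached below the old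
root) realizes `{a₁,…,a_n}`. -/
theorem stabilization_realizes (n : ℕ) (hn : 2 ≤ n) (a : ℕ → ℕ)
    (hmono : ∀ i j, i ≤ j → j < n → a i ≤ a j) (h : a (n - 2) + 1 = a (n - 1)) :
    (qfact (a (n - 1)) / ∏ i ∈ Finset.range (n - 1), qnum (a i + 1) =
      qfact (a (n - 2)) / ∏ i ∈ Finset.range (n - 2), qnum (a i + 1)) ∧
    (∀ t' : PTree, D t' = (Multiset.range (n - 1)).map a →
      D (node [t']) = (Multiset.range n).map a) :=
  stabilization_realizes_general n a hmono h
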